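/- Let k ≥ 1 and r ≥ 2 be integers, and let G be the edge-colored graph with vertex set {v₁, v₂, …, v_{kr+1}} in which, for each i ∈ {1, …, kr+1} and each j ∈ {1, …, k}, the edge v_i v_{i+j} (subscripts taken modulo kr+1) receives color i. Then the rainbow girth of G equals r + 1, which equals ⌈(kr+1)/k⌉; in particular, v₁ v_{1+k} v_{1+2k} ⋯ v_{1+rk} v₁ is a shortest rainbow cycle of G. -/

import Mathlib

/-!
Lift a rainbow cycle of length `ℓ` in `ZMod n` to an integer walk whose steps lie in
`[-k, k] \ {0}`. If `k ℓ < n` the lift is closed, so it has a lowest vertex; both cycle edges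
there go upward from it and therefore both carry its colour, which a rainbow cycle forbids.
Hence `k ℓ ≥ k r + 1`, i.e. `ℓ ≥ r + 1`. Conversely, `t ↦ 1 + t k` maps the standard
`(r + 1)`-cycle injectively into `G`, and the edge leaving `1 + t k` has colour `1 + t k`.
-/

open SimpleGraph Finset

theorem SimpleGraph.Walk.map_edges_getVert_ne_of_nodup {V α : Type*} {G : SimpleGraph V}
    {u v : V} {w : G.Walk u v} {c : Sym2 V → α} (h : (w.edges.map c).Nodup) {a b : ℕ}
    (ha : a < w.length) (hb : b < w.length) (hab : a ≠ b) :
    c s(w.getVert a, w.getVert (a + 1)) ≠ c s(w.getVert b, w.getVert (b + 1)) := by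
  have hlen : (w.edges.map c).length = w.length := by simp
  have := (h.getElem_inj_iff (i := a) (j := b) (hi := by omega) (hj := by omega)).not.mpr hab
  simpa [Walk.getElem_edges] using this

theorem exists_valley_of_eq {α : Type*} [LinearOrder α] {p : ℕ → α} {ℓ : ℕ} (hℓ : 0 < ℓ)
    (hp : p ℓ = p 0) (hne : ∀ t < ℓ, p (t + 1) ≠ p t) :
    ∃ a < ℓ, ∃ b < ℓ, a ≠ b ∧ p (b + 1) = p a ∧ p a < p (a + 1) ∧ p (b + 1) < p b := by
  obtain ⟨a, ha, hmin⟩ := (range ℓ).exists_min_image p (nonempty_range_iff.mpr hℓ.ne')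
  rw [mem_range] at ha
  have hle : ∀ t ≤ ℓ, p a ≤ p t := fun t ht => by
    rcases ht.lt_or_eq with ht | rfl
    · exact hmin t (mem_range.mpr ht)
    · exact hp ▸ hmin 0 (mem_range.mpr hℓ)
  have hup : p a < p (a + 1) := (hle _ ha).lt_of_ne (hne a ha).symm
  obtain ⟨b, hb, hpb⟩ : ∃ b < ℓ, p (b + 1) = p a := by
    rcases Nat.eq_zero_or_pos a with rfl | hapos
    · exact ⟨ℓ - 1, by omega, by rw [Nat.sub_add_cancel hℓ, hp]⟩
    · exact ⟨a - 1, by omega, by rw [Nat.sub_add_cancel hapos]⟩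
  have hdown : p (b + 1) < p b := hpb ▸ (hle b hb.le).lt_of_ne' (hpb ▸ (hne b hb).symm)
  exact ⟨a, ha, b, hb, by rintro rfl; exact hup.not_gt (hpb ▸ hdown), hpb, hup, hdown⟩

theorem exists_eq_mk_add_one_of_mem_edgeSet_cycleGraph {n : ℕ} {e : Sym2 (Fin (n + 2))}
    (he : e ∈ (cycleGraph (n + 2)).edgeSet) : ∃ i, e = s(i, i + 1) := by
  induction e using Sym2.ind with
  | _ u v =>
  rw [mem_edgeSet, cycleGraph_adj] at he
  rcases he with h | h
  · exact ⟨v, by rw [sub_eq_iff_eq_add'.mp h, Sym2.eq_swap]⟩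
  · exact ⟨u, by rw [sub_eq_iff_eq_add'.mp h]⟩

theorem cycleGraph.mem_support_cycle {n : ℕ} (i : Fin (n + 3)) :
    i ∈ (cycleGraph.cycle n).support := by
  have h := cycleGraph.getVert_cycle (n := n) (m := n + 3 - i) (by omega)
  simp only [Nat.sub_sub_self i.2.le, Nat.mod_eq_of_lt i.2] at h
  rw [Fin.eta] at h
  exact h ▸ Walk.getVert_mem_support _ _

section RainbowLowerBound

variable {n k : ℕ} {G : SimpleGraph (ZMod n)} {c : Sym2 (ZMod n) → ZMod n}

theorem exists_int_step_of_adj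
    (hG : ∀ u v, G.Adj u v → ∃ j : ℕ, 1 ≤ j ∧ j ≤ k ∧ (v = u + j ∨ u = v + j))
    (hc : ∀ (i : ZMod n) (j : ℕ), 1 ≤ j → j ≤ k → c s(i, i + j) = i)
    {u v : ZMod n} (h : G.Adj u v) :
    ∃ d : ℤ, d ≠ 0 ∧ |d| ≤ k ∧ v = u + d ∧ c s(u, v) = if 0 < d then u else v := by
  obtain ⟨j, hj1, hjk, rfl | rfl⟩ := hG u v h
  · refine ⟨j, by omega, by simpa using hjk, by simp, ?_⟩
    rw [if_pos (by omega), hc u j hj1 hjk]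
  · refine ⟨-j, by omega, by simpa using hjk, by push_cast; ring, ?_⟩
    rw [if_neg (by omega), Sym2.eq_swap, hc v j hj1 hjk]

theorem le_mul_length_of_isCycle
    (hG : ∀ u v, G.Adj u v → ∃ j : ℕ, 1 ≤ j ∧ j ≤ k ∧ (v = u + j ∨ u = v + j))
    (hc : ∀ (i : ZMod n) (j : ℕ), 1 ≤ j → j ≤ k → c s(i, i + j) = i)
    {v : ZMod n} {w : G.Walk v v} (hw : w.IsCycle) (hrain : (w.edges.map c).Nodup) :
    n ≤ k * w.length := by
  choose! d hd using fun u v (h : G.Adj u v) => exists_int_step_of_adj hG hc h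
  set ℓ := w.length
  set x := w.getVert
  have hstep : ∀ t < ℓ, d (x t) (x (t + 1)) ≠ 0 ∧ |d (x t) (x (t + 1))| ≤ k ∧
      x (t + 1) = x t + d (x t) (x (t + 1)) ∧
      c s(x t, x (t + 1)) = if 0 < d (x t) (x (t + 1)) then x t else x (t + 1) :=
    fun t ht => hd _ _ (w.adj_getVert_succ ht)
  set p : ℕ → ℤ := fun t => ∑ s ∈ range t, d (x s) (x (s + 1))
  have hp_succ : ∀ t, p (t + 1) = p t + d (x t) (x (t + 1)) := fun t => sum_range_succ _ _
  have hx : ∀ t ≤ ℓ, x t = x 0 + (p t : ZMod n) := by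
    intro t ht
    induction t with
    | zero => simp [p]
    | succ t ih =>
      rw [hp_succ, Int.cast_add, ← add_assoc, ← ih (by omega)]
      exact (hstep t (by omega)).2.2.1
  by_contra! hlt
  have hpℓ : p ℓ = p 0 := by
    have hdvd : (n : ℤ) ∣ p ℓ := by
      rw [← ZMod.intCast_zmod_eq_zero_iff_dvd]
      simpa [x, ℓ] using hx ℓ le_rfl
    have hbound : |p ℓ| ≤ k * ℓ := by
      calc |p ℓ| ≤ ∑ s ∈ range ℓ, |d (x s) (x (s + 1))| := abs_sum_le_sum_abs _ _
        _ ≤ ∑ s ∈ range ℓ, (k : ℤ) :=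
          sum_le_sum fun s hs => (hstep s (mem_range.mp hs)).2.1
        _ = k * ℓ := by simp [mul_comm]
    rw [Int.eq_zero_of_abs_lt_dvd hdvd (hbound.trans_lt (by exact_mod_cast hlt))]
    simp [p]
  have hℓ : 0 < ℓ := by have := hw.three_le_length; omega
  obtain ⟨a, ha, b, hb, hab, hpab, hpa, hpb⟩ := exists_valley_of_eq hℓ hpℓ
    fun t ht => by simpa [hp_succ] using (hstep t ht).1
  have hxab : x (b + 1) = x a := by rw [hx _ hb, hx _ ha.le, hpab]
  apply w.map_edges_getVert_ne_of_nodup hrain ha hb hab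
  rw [(hstep a ha).2.2.2, (hstep b hb).2.2.2, if_pos (by linarith [hp_succ a]),
    if_neg (by linarith [hp_succ b]), hxab]

end RainbowLowerBound

def starJump (k r t : ℕ) : ZMod (k * r + 1) := 1 + ((t * k : ℕ) : ZMod (k * r + 1))

theorem starJump_injOn {k r : ℕ} (hk : 1 ≤ k) {s t : ℕ} (hs : s ≤ r) (ht : t ≤ r)
    (h : starJump k r s = starJump k r t) : s = t := by
  have hlt : ∀ u ≤ r, u * k < k * r + 1 := fun u hu => by nlinarith
  rw [starJump, starJump, add_right_inj, ZMod.natCast_eq_natCast_iff',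
    Nat.mod_eq_of_lt (hlt s hs), Nat.mod_eq_of_lt (hlt t ht)] at h
  exact Nat.eq_of_mul_eq_mul_right hk h

theorem exists_starJump_fin_succ {k r : ℕ} (hk : 1 ≤ k) (i : Fin (r + 1)) :
    ∃ j : ℕ, 1 ≤ j ∧ j ≤ k ∧
      starJump k r (i + 1 : Fin (r + 1)) = starJump k r i + (j : ZMod (k * r + 1)) := by
  obtain ⟨i, rfl⟩ | rfl := i.eq_castSucc_or_eq_last
  · refine ⟨k, hk, le_rfl, ?_⟩
    rw [Fin.coeSucc_eq_succ, Fin.val_succ, Fin.val_castSucc, starJump, starJump]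
    push_cast
    ring
  · refine ⟨1, le_rfl, hk, ?_⟩
    have : ((k * r + 1 : ℕ) : ZMod (k * r + 1)) = 0 := ZMod.natCast_self _
    rw [Fin.last_add_one, Fin.val_zero, Fin.val_last, starJump, starJump]
    push_cast at this ⊢
    linear_combination -this

section RainbowCycle

variable {k r : ℕ} {G : SimpleGraph (ZMod (k * r + 1))}
  {c : Sym2 (ZMod (k * r + 1)) → ZMod (k * r + 1)}

theorem exists_rainbow_isCycle_starJump (hk : 1 ≤ k) (hr : 2 ≤ r)
    (hG : ∀ (u : ZMod (k * r + 1)) (j : ℕ), 1 ≤ j → j ≤ k → u ≠ u + j → G.Adj u (u + j))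
    (hc : ∀ (i : ZMod (k * r + 1)) (j : ℕ), 1 ≤ j → j ≤ k → c s(i, i + j) = i) :
    ∃ w : G.Walk 1 1, w.IsCycle ∧ (w.edges.map c).Nodup ∧ w.length = r + 1 ∧
      {v | v ∈ w.support} = {v | ∃ t ≤ r, v = starJump k r t} := by
  obtain ⟨m, rfl⟩ := Nat.exists_eq_add_of_le' hr
  let f : Fin (m + 3) → ZMod (k * (m + 2) + 1) := fun i => starJump k (m + 2) i
  have hf_inj : Function.Injective f := fun s t h =>
    Fin.ext (starJump_injOn hk (Nat.lt_succ_iff.mp s.2) (Nat.lt_succ_iff.mp t.2) h)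
  have hf_succ : ∀ i, G.Adj (f i) (f (i + 1)) ∧ c s(f i, f (i + 1)) = f i := fun i => by
    obtain ⟨j, hj1, hjk, hj⟩ := exists_starJump_fin_succ hk i
    have hne : f i ≠ f (i + 1) := hf_inj.ne (by simp)
    simp only [f, hj] at hne ⊢
    exact ⟨hG _ j hj1 hjk hne, hc _ j hj1 hjk⟩
  let φ : cycleGraph (m + 3) →g G :=
    { toFun := f
      map_rel' := fun {u v} huv => by
        rcases cycleGraph_adj.mp huv with h | h
        · obtain rfl := sub_eq_iff_eq_add'.mp h; exact (hf_succ v).1.symm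
        · obtain rfl := sub_eq_iff_eq_add'.mp h; exact (hf_succ u).1 }
  have hcolor : ∀ e ∈ (cycleGraph.cycle m).edges, ∃ i, e = s(i, i + 1) ∧ c (e.map f) = f i := by
    intro e he
    obtain ⟨i, hi⟩ := exists_eq_mk_add_one_of_mem_edgeSet_cycleGraph
      ((cycleGraph.cycle m).edges_subset_edgeSet he)
    exact ⟨i, hi, by rw [hi, Sym2.map_mk]; exact (hf_succ i).2⟩
  have hφ0 : φ 0 = 1 := by simp [φ, f, starJump]
  refine ⟨((cycleGraph.cycle m).map φ).copy hφ0 hφ0, ?_, ?_, ?_, ?_⟩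
  · rw [Walk.isCycle_copy]
    exact cycleGraph.isCycle_cycle.map hf_inj
  · rw [Walk.edges_copy, Walk.edges_map, List.map_map]
    refine cycleGraph.isCycle_cycle.edges_nodup.map_on fun e he e' he' hee' => ?_
    obtain ⟨i, rfl, hi⟩ := hcolor e he
    obtain ⟨i', rfl, hi'⟩ := hcolor e' he'
    rw [hf_inj (hi.symm.trans (hee'.trans hi'))]
  · simp
  · ext v
    simp only [Walk.support_copy, Walk.support_map, List.mem_map, Set.mem_ofPred_eq]
    constructor
    · rintro ⟨i, -, rfl⟩
      exact ⟨i, Nat.lt_succ_iff.mp i.2, rfl⟩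
    · rintro ⟨t, ht, rfl⟩
      exact ⟨⟨t, by omega⟩, cycleGraph.mem_support_cycle _, rfl⟩

end RainbowCycle

theorem Nat.ceil_natCast_mul_add_one_div {α : Type*} [Field α] [LinearOrder α]
    [IsStrictOrderedRing α] [FloorSemiring α] {k : ℕ} (hk : 0 < k) (r : ℕ) :
    ⌈((k * r + 1 : ℕ) : α) / k⌉₊ = r + 1 := by
  have hk' : (0 : α) < k := by exact_mod_cast hk
  rw [Nat.ceil_eq_iff (by omega), lt_div_iff₀ hk', div_le_iff₀ hk']
  push_cast
  constructor <;> nlinarith [(by exact_mod_cast hk : (1 : α) ≤ k)]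

/-- The star construction: on vertex set `ZMod (k*r+1)` (for `k ≥ 1`, `r ≥ 2`),
join each vertex `i` to `i+1, …, i+k`, and color each edge `{i, i+j}`
(`1 ≤ j ≤ k`) with color `i`, so each color class is a star of size `k` centered
at a distinct vertex.  Then the rainbow girth of this edge-colored graph equals
`r + 1 = ⌈(kr+1)/k⌉`; in particular the cycle through `1, 1+k, 1+2k, …, 1+rk` is
a shortest rainbow cycle. -/
theorem statement14 (k r : ℕ) (hk : 1 ≤ k) (hr : 2 ≤ r)
    (G : SimpleGraph (ZMod (k * r + 1)))
    (hG : ∀ u v : ZMod (k * r + 1),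
      G.Adj u v ↔ u ≠ v ∧ ∃ j : ℕ, 1 ≤ j ∧ j ≤ k ∧
        (v = u + (j : ZMod (k * r + 1)) ∨ u = v + (j : ZMod (k * r + 1))))
    (c : Sym2 (ZMod (k * r + 1)) → ZMod (k * r + 1))
    (hc : ∀ (i : ZMod (k * r + 1)) (j : ℕ), 1 ≤ j → j ≤ k →
      c s(i, i + (j : ZMod (k * r + 1))) = i) :
    sInf {ℓ : ℕ | ∃ (v : ZMod (k * r + 1)) (w : G.Walk v v),
        w.IsCycle ∧ (w.edges.map c).Nodup ∧ w.length = ℓ} = r + 1 ∧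
    r + 1 = ⌈((k * r + 1 : ℕ) : ℝ) / (k : ℝ)⌉₊ ∧
    ∃ w : G.Walk (1 : ZMod (k * r + 1)) 1,
      w.IsCycle ∧ (w.edges.map c).Nodup ∧ w.length = r + 1 ∧
      {v | v ∈ w.support} =
        {v : ZMod (k * r + 1) | ∃ t : ℕ, t ≤ r ∧ v = 1 + ((t * k : ℕ) : ZMod (k * r + 1))} := by
  obtain ⟨w, hw, hrain, hlen, hsupp⟩ := exists_rainbow_isCycle_starJump hk hr
    (fun u j hj1 hjk hne => (hG u (u + j)).2 ⟨hne, j, hj1, hjk, Or.inl rfl⟩) hc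
  refine ⟨?_, (Nat.ceil_natCast_mul_add_one_div hk r).symm, w, hw, hrain, hlen, hsupp⟩
  refine le_antisymm (Nat.sInf_le ⟨1, w, hw, hrain, hlen⟩)
    (le_csInf ⟨r + 1, 1, w, hw, hrain, hlen⟩ ?_)
  rintro _ ⟨v, w', hw', hrain', rfl⟩
  have := le_mul_length_of_isCycle (fun u v h => ((hG u v).1 h).2) hc hw' hrain'
  by_contra! hlt
  nlinarith
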